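/- arXiv:2006.06900 — 4 statements merged into one kernel-verified Lean document; each statement's English description precedes it below -/
import Mathlib

section
/- Let p be a probability measure on a measurable space X and let f : X → ℝ be a bounded measurable function. Then the supremum over all probability measures q on X with q ≪ p of the quantity ∫ f dq − KL(q ‖ p) equals log ∫ exp(f(x)) dp(x), and the supremum is attained by the probability measure with density exp(f)/(∫ exp(f) dp) with respect to p. -/
open MeasureTheory
open scoped Classical

/-- Kullback–Leibler divergence of `q` from `p`, valued in `EReal`:
`∫ log (dq/dp) dq` when `q ≪ p` (and the integral is defined), and `+∞` otherwise. -/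
noncomputable def klDiv {X : Type*} [MeasurableSpace X] (q p : Measure X) : EReal :=
  if q ≪ p ∧ Integrable (fun x => Real.log (q.rnDeriv p x).toReal) q
  then ((∫ x, Real.log (q.rnDeriv p x).toReal ∂q : ℝ) : EReal)
  else ⊤

/-- Nonnegativity of the KL integrand integral: for probability measures `q ≪ μ`,
`0 ≤ ∫ llr q μ dq`. -/
lemma integral_llr_nonneg_aux {X : Type*} [MeasurableSpace X] {q μ : Measure X}
    [IsProbabilityMeasure q] [IsProbabilityMeasure μ] (hqμ : q ≪ μ)
    (h_int : Integrable (llr q μ) q) : 0 ≤ ∫ x, llr q μ x ∂q := by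
  have hpos : ∀ᵐ x ∂q, 0 < (μ.rnDeriv q x).toReal := by
    filter_upwards [Measure.inv_rnDeriv hqμ,
      hqμ.ae_le (Measure.rnDeriv_lt_top q μ), Measure.rnDeriv_lt_top μ q] with x hx hlt htop
    refine ENNReal.toReal_pos ?_ htop.ne
    rw [← hx]
    simp only [Pi.inv_apply, ne_eq, ENNReal.inv_eq_zero]
    exact hlt.ne
  have h_eq : (fun x => -llr q μ x) =ᵐ[q] llr μ q := neg_llr hqμ
  have h_le : ∀ᵐ x ∂q, -llr q μ x ≤ (μ.rnDeriv q x).toReal - 1 := by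
    filter_upwards [h_eq, hpos] with x hx hxpos
    rw [hx]
    exact Real.log_le_sub_one_of_pos hxpos
  have h_int2 : Integrable (fun x => (μ.rnDeriv q x).toReal - 1) q :=
    Measure.integrable_toReal_rnDeriv.sub (integrable_const 1)
  have h1 : ∫ x, -llr q μ x ∂q ≤ ∫ x, ((μ.rnDeriv q x).toReal - 1) ∂q :=
    integral_mono_ae h_int.neg h_int2 h_le
  have h2 : ∫ x, ((μ.rnDeriv q x).toReal - 1) ∂q
      = ∫ x, (μ.rnDeriv q x).toReal ∂q - 1 := by
    rw [integral_sub Measure.integrable_toReal_rnDeriv (integrable_const 1)]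
    simp
  have h3 : ∫ x, (μ.rnDeriv q x).toReal ∂q ≤ 1 := by
    have := Measure.setIntegral_toReal_rnDeriv_le (μ := μ) (ν := q)
      (s := Set.univ) (measure_ne_top μ _)
    rw [setIntegral_univ] at this
    simpa using this
  rw [integral_neg] at h1
  linarith

/-- Gibbs variational principle: the supremum of `∫ f dq − KL(q ‖ p)` over probability measures
`q ≪ p` equals `log ∫ exp f dp`, and it is attained by the tilted measure `exp(f)/Z · p`. -/
theorem gibbs_variational_principle
    {X : Type*} [MeasurableSpace X] (p : Measure X) [IsProbabilityMeasure p]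
    (f : X → ℝ) (hf : Measurable f) (hbd : ∃ C : ℝ, ∀ x, |f x| ≤ C) :
    (∀ q : Measure X, IsProbabilityMeasure q → q ≪ p →
      ((∫ x, f x ∂q : ℝ) : EReal) - klDiv q p ≤
        ((Real.log (∫ x, Real.exp (f x) ∂p) : ℝ) : EReal)) ∧
    ((∫ x, f x ∂(p.tilted f) : ℝ) : EReal) - klDiv (p.tilted f) p =
      ((Real.log (∫ x, Real.exp (f x) ∂p) : ℝ) : EReal) := by
  obtain ⟨C, hC⟩ := hbd
  have hexp : Integrable (fun x => Real.exp (f x)) p := by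
    refine Integrable.mono' (integrable_const (Real.exp C)) hf.exp.aestronglyMeasurable
      (Filter.Eventually.of_forall fun x => ?_)
    rw [Real.norm_eq_abs, Real.abs_exp]
    exact Real.exp_le_exp.2 ((abs_le.1 (hC x)).2)
  have hint_f : ∀ (q : Measure X), Integrable f q ∨ ¬ IsProbabilityMeasure q := by
    intro q
    by_cases hq : IsProbabilityMeasure q
    · left
      exact Integrable.mono' (integrable_const C) hf.aestronglyMeasurable
        (Filter.Eventually.of_forall fun x => (Real.norm_eq_abs _).le.trans_eq' rfl |>.trans (hC x))
    · exact Or.inr hq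
  have hint_f' : ∀ (q : Measure X), IsProbabilityMeasure q → Integrable f q := by
    intro q hq
    exact Integrable.mono' (integrable_const C) hf.aestronglyMeasurable
      (Filter.Eventually.of_forall fun x => by rw [Real.norm_eq_abs]; exact hC x)
  have hprob : IsProbabilityMeasure (p.tilted f) := isProbabilityMeasure_tilted hexp
  constructor
  · intro q hq hqp
    by_cases hInt : Integrable (llr q p) q
    · rw [klDiv, if_pos ⟨hqp, hInt⟩, ← EReal.coe_sub, EReal.coe_le_coe_iff]
      have hfq : Integrable f q := hint_f' q hq
      have h_tilt := integral_llr_tilted_right hqp hfq hexp hInt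
      have hq_tilted : q ≪ p.tilted f := hqp.trans (absolutelyContinuous_tilted hexp)
      have h_int_t : Integrable (llr q (p.tilted f)) q :=
        integrable_llr_tilted_right hqp hfq hInt hexp
      have h0 := integral_llr_nonneg_aux hq_tilted h_int_t
      rw [h_tilt] at h0
      have : ∫ x, llr q p x ∂q = ∫ x, Real.log (q.rnDeriv p x).toReal ∂q := rfl
      linarith [this]
    · rw [klDiv, if_neg (fun h => hInt h.2)]
      rw [show ((∫ x, f x ∂q : ℝ) : EReal) - ⊤ = ⊥ by rfl]
      exact bot_le
  · have h_ae : (fun x => Real.log ((p.tilted f).rnDeriv p x).toReal)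
        =ᵐ[p.tilted f] fun x => f x - Real.log (∫ x, Real.exp (f x) ∂p) :=
      (tilted_absolutelyContinuous p f).ae_le (log_rnDeriv_tilted_left_self hexp)
    have hft : Integrable f (p.tilted f) := hint_f' _ hprob
    have hInt : Integrable (fun x => Real.log ((p.tilted f).rnDeriv p x).toReal) (p.tilted f) := by
      rw [integrable_congr h_ae]
      exact hft.sub (integrable_const _)
    rw [klDiv, if_pos ⟨tilted_absolutelyContinuous p f, hInt⟩, ← EReal.coe_sub,
      EReal.coe_eq_coe_iff]
    have hcalc : ∫ x, Real.log ((p.tilted f).rnDeriv p x).toReal ∂(p.tilted f)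
        = ∫ x, f x ∂(p.tilted f) - Real.log (∫ x, Real.exp (f x) ∂p) := by
      rw [integral_congr_ae h_ae, integral_sub hft (integrable_const _), integral_const]
      simp
    rw [hcalc]
    ring
end

section
/- Let μ be a σ-finite measure on a measurable space X, let p be a probability density with respect to μ (p ≥ 0, ∫ p dμ = 1, p(x) > 0 μ-a.e.), let α ≥ 0, and let f : X → ℝ be measurable with −a ≤ f(x) ≤ b for all x, where a + b ≥ 0. Let Z = ∫ p(x) exp(α f(x)) dμ(x) and let q(x) = p(x) exp(α f(x))/Z. Let P and Q be the probability measures with densities p and q with respect to μ. Then KL(Q ‖ P) − KL(P ‖ Q) ≤ 2α(a + b). -/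
open MeasureTheory

/-- Appendix A.1 main bound: for the auxiliary density `q ∝ p · exp(α f)` with
`−a ≤ f ≤ b`, the forward and reverse KL divergences (written with densities,
`KL(Q‖P) = ∫ q log(q/p) dμ`) differ by at most `2α(a + b)`. -/
theorem klDiv_reverse_klDiv_diff_le
    {X : Type*} [MeasurableSpace X] (μ : Measure X) [SigmaFinite μ]
    (p : X → ℝ) (hp : Measurable p) (hp0 : ∀ x, 0 ≤ p x)
    (hp1 : ∫ x, p x ∂μ = 1) (hppos : ∀ᵐ x ∂μ, 0 < p x)
    (α : ℝ) (hα : 0 ≤ α)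
    (f : X → ℝ) (hf : Measurable f)
    (a b : ℝ) (hfb : ∀ x, -a ≤ f x ∧ f x ≤ b) (hab : 0 ≤ a + b) :
    let Z : ℝ := ∫ x, p x * Real.exp (α * f x) ∂μ
    let q : X → ℝ := fun x => p x * Real.exp (α * f x) / Z
    (∫ x, q x * Real.log (q x / p x) ∂μ) - (∫ x, p x * Real.log (p x / q x) ∂μ)
      ≤ 2 * α * (a + b) := by
  intro Z q
  have hqdef : ∀ x, q x = p x * Real.exp (α * f x) / Z := fun _ => rfl
  have hpint : Integrable p μ := by
    by_contra h
    rw [integral_undef h] at hp1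
    norm_num at hp1
  have hg_meas : Measurable (fun x => p x * Real.exp (α * f x)) :=
    hp.mul (hf.const_mul α).exp
  have hgint : Integrable (fun x => p x * Real.exp (α * f x)) μ := by
    refine Integrable.mono' (hpint.const_mul (Real.exp (α * b)))
      hg_meas.aestronglyMeasurable ?_
    filter_upwards with x
    rw [Real.norm_eq_abs, abs_of_nonneg (mul_nonneg (hp0 x) (Real.exp_pos _).le), mul_comm (Real.exp (α * b))]
    exact mul_le_mul_of_nonneg_left
      (Real.exp_le_exp.mpr (mul_le_mul_of_nonneg_left (hfb x).2 hα)) (hp0 x)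
  have hZ_ge : Real.exp (α * (-a)) ≤ Z := by
    calc Real.exp (α * (-a)) = ∫ x, Real.exp (α * (-a)) * p x ∂μ := by
          rw [integral_const_mul, hp1, mul_one]
      _ ≤ Z := by
          refine integral_mono (hpint.const_mul _) hgint fun x => ?_
          rw [mul_comm]
          exact mul_le_mul_of_nonneg_left
            (Real.exp_le_exp.mpr (mul_le_mul_of_nonneg_left (hfb x).1 hα)) (hp0 x)
  have hZpos : 0 < Z := lt_of_lt_of_le (Real.exp_pos _) hZ_ge
  have hqint : Integrable q μ := hgint.div_const Z
  have hqone : ∫ x, q x ∂μ = 1 := by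
    simp only [hqdef]
    rw [integral_div, div_self hZpos.ne']
  have hq0 : ∀ x, 0 ≤ q x := fun x =>
    div_nonneg (mul_nonneg (hp0 x) (Real.exp_pos _).le) hZpos.le
  have habs : ∀ x, |f x| ≤ max a b := fun x =>
    abs_le.mpr ⟨by have := (hfb x).1; have := neg_le_neg (le_max_left a b); linarith,
      le_trans (hfb x).2 (le_max_right a b)⟩
  have hqf_int : Integrable (fun x => q x * f x) μ := by
    refine Integrable.mono' (hqint.const_mul (max a b))
      ((hg_meas.div_const Z).mul hf).aestronglyMeasurable ?_
    filter_upwards with x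
    rw [Real.norm_eq_abs, abs_mul, abs_of_nonneg (hq0 x), mul_comm (max a b)]
    exact mul_le_mul_of_nonneg_left (habs x) (hq0 x)
  have hpf_int : Integrable (fun x => p x * f x) μ := by
    refine Integrable.mono' (hpint.const_mul (max a b))
      (hp.mul hf).aestronglyMeasurable ?_
    filter_upwards with x
    rw [Real.norm_eq_abs, abs_mul, abs_of_nonneg (hp0 x), mul_comm (max a b)]
    exact mul_le_mul_of_nonneg_left (habs x) (hp0 x)
  have e1 : ∀ x, q x * Real.log (q x / p x) = α * (q x * f x) - Real.log Z * q x := by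
    intro x
    rcases eq_or_lt_of_le (hp0 x) with h | h
    · have hq : q x = 0 := by simp [hqdef x, ← h]
      simp [hq]
    · have hratio : q x / p x = Real.exp (α * f x) / Z := by
        rw [hqdef]
        field_simp
      rw [hratio, Real.log_div (Real.exp_ne_zero _) hZpos.ne', Real.log_exp]
      ring
  have e2 : ∀ x, p x * Real.log (p x / q x) = Real.log Z * p x - α * (p x * f x) := by
    intro x
    rcases eq_or_lt_of_le (hp0 x) with h | h
    · simp [← h]
    · have hratio : p x / q x = Z / Real.exp (α * f x) := by
        rw [hqdef]
        field_simp
      rw [hratio, Real.log_div hZpos.ne' (Real.exp_ne_zero _), Real.log_exp]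
      ring
  have I1 : ∫ x, q x * Real.log (q x / p x) ∂μ
      = α * (∫ x, q x * f x ∂μ) - Real.log Z := by
    simp_rw [e1]
    rw [integral_sub (hqf_int.const_mul α) (hqint.const_mul _), integral_const_mul,
      integral_const_mul, hqone, mul_one]
  have I2 : ∫ x, p x * Real.log (p x / q x) ∂μ
      = Real.log Z - α * (∫ x, p x * f x ∂μ) := by
    simp_rw [e2]
    rw [integral_sub (hpint.const_mul _) (hpf_int.const_mul α), integral_const_mul,
      integral_const_mul, hp1, mul_one]
  have hqfb : ∫ x, q x * f x ∂μ ≤ b := by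
    calc ∫ x, q x * f x ∂μ ≤ ∫ x, b * q x ∂μ := by
          refine integral_mono hqf_int (hqint.const_mul b) fun x => ?_
          rw [mul_comm b]
          exact mul_le_mul_of_nonneg_left (hfb x).2 (hq0 x)
      _ = b := by rw [integral_const_mul, hqone, mul_one]
  have hpfb : ∫ x, p x * f x ∂μ ≤ b := by
    calc ∫ x, p x * f x ∂μ ≤ ∫ x, b * p x ∂μ := by
          refine integral_mono hpf_int (hpint.const_mul b) fun x => ?_
          rw [mul_comm b]
          exact mul_le_mul_of_nonneg_left (hfb x).2 (hp0 x)
      _ = b := by rw [integral_const_mul, hp1, mul_one]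
  have hlogZ : α * (-a) ≤ Real.log Z := by
    have := Real.log_le_log (Real.exp_pos _) hZ_ge
    rwa [Real.log_exp] at this
  rw [I1, I2]
  nlinarith [mul_le_mul_of_nonneg_left hqfb hα, mul_le_mul_of_nonneg_left hpfb hα]
end

section
/- Let X be a compact metric space and let μ and ν be Borel probability measures on X. Then there exists a 1-Lipschitz function f* : X → ℝ that attains the supremum of ∫ f dμ − ∫ f dν over all 1-Lipschitz functions f : X → ℝ; that is, for every 1-Lipschitz g : X → ℝ, ∫ g dμ − ∫ g dν ≤ ∫ f* dμ − ∫ f* dν. -/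
/-!
Subtracting the constant `f x₀` does not change `∫ f dμ - ∫ f dν` when `μ` and `ν` are
probability measures, so it suffices to maximise over the 1-Lipschitz functions vanishing at a
base point `x₀`. By Arzelà–Ascoli these form a compact set of bounded continuous functions, on
which the objective is continuous (integration against a probability measure is 1-Lipschitz in
the sup norm), so it attains its maximum there.
-/

open MeasureTheory

namespace BoundedContinuousFunction

theorem isCompact_setOf_lipschitzWith_apply_eq_zero {X : Type*} [PseudoMetricSpace X]
    [CompactSpace X] (K : NNReal) (x₀ : X) :
    IsCompact {f : X →ᵇ ℝ | LipschitzWith K f ∧ f x₀ = 0} := by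
  refine arzela_ascoli₂ (Metric.closedBall 0 (K * Metric.diam (Set.univ : Set X)))
    (isCompact_closedBall _ _) _ ?_ ?_ ?_
  · exact ((isClosed_setOfPred_lipschitzWith K).preimage continuous_coeFun).inter
      (isClosed_eq (continuous_eval_const x₀) continuous_const)
  · rintro f x ⟨hf, hf₀⟩
    rw [Metric.mem_closedBall, ← hf₀]
    calc dist (f x) (f x₀) ≤ K * dist x x₀ := hf.dist_le_mul x x₀
      _ ≤ K * Metric.diam (Set.univ : Set X) := by
        gcongr
        exact Metric.dist_le_diam_of_mem isCompact_univ.isBounded trivial trivial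
  · exact (LipschitzWith.uniformEquicontinuous _ K fun f => f.2.1).equicontinuous

section Integral

variable {X : Type*} [TopologicalSpace X] [MeasurableSpace X] [OpensMeasurableSpace X]

theorem lipschitzWith_integral {E : Type*} [NormedAddCommGroup E] [NormedSpace ℝ E]
    [SecondCountableTopology E] [MeasurableSpace E] [BorelSpace E]
    (μ : Measure X) [IsProbabilityMeasure μ] :
    LipschitzWith 1 fun f : X →ᵇ E => ∫ x, f x ∂μ :=
  LipschitzWith.of_dist_le_mul fun f g => by
    rw [NNReal.coe_one, one_mul, dist_eq_norm, dist_eq_norm,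
      ← integral_sub (f.integrable μ) (g.integrable μ)]
    exact (f - g).norm_integral_le_norm μ

theorem integral_sub_integral_add_const (μ ν : Measure X) [IsProbabilityMeasure μ]
    [IsProbabilityMeasure ν] (f : X →ᵇ ℝ) (c : ℝ) :
    (∫ x, (f + const X c) x ∂μ) - ∫ x, (f + const X c) x ∂ν =
      (∫ x, f x ∂μ) - ∫ x, f x ∂ν := by
  rw [integral_add_const, integral_add_const]
  simp

end Integral

end BoundedContinuousFunction

open BoundedContinuousFunction

/-- Existence of an optimal 1-Lipschitz Wasserstein critic on a compact metric space:
some 1-Lipschitz `f*` maximizes `∫ f dμ − ∫ f dν` over all 1-Lipschitz functions `f`. -/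
theorem exists_optimal_lipschitz_critic
    {X : Type*} [MetricSpace X] [CompactSpace X] [MeasurableSpace X] [BorelSpace X]
    (μ ν : Measure X) [IsProbabilityMeasure μ] [IsProbabilityMeasure ν] :
    ∃ fstar : X → ℝ, LipschitzWith 1 fstar ∧
      ∀ g : X → ℝ, LipschitzWith 1 g →
        (∫ x, g x ∂μ) - (∫ x, g x ∂ν) ≤ (∫ x, fstar x ∂μ) - (∫ x, fstar x ∂ν) := by
  obtain ⟨x₀⟩ := nonempty_of_isProbabilityMeasure μ
  obtain ⟨f, ⟨hf, -⟩, hf_max⟩ := (isCompact_setOf_lipschitzWith_apply_eq_zero 1 x₀).exists_isMaxOn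
    ⟨0, LipschitzWith.const' 0, rfl⟩
    ((lipschitzWith_integral μ).continuous.sub (lipschitzWith_integral ν).continuous).continuousOn
  refine ⟨f, hf, fun g hg => ?_⟩
  let gb : X →ᵇ ℝ := mkOfCompact ⟨g, hg.continuous⟩
  let g₀ := gb + const X (-g x₀)
  have hg₀ : LipschitzWith 1 g₀ ∧ g₀ x₀ = 0 := by
    refine ⟨?_, by simp [g₀, gb]⟩
    have hg_shift : LipschitzWith 1 fun x => g x + -g x₀ := by
      simpa only [add_zero] using hg.add (LipschitzWith.const (-g x₀))
    exact hg_shift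
  calc (∫ x, g x ∂μ) - ∫ x, g x ∂ν = (∫ x, g₀ x ∂μ) - ∫ x, g₀ x ∂ν :=
        (integral_sub_integral_add_const μ ν gb (-g x₀)).symm
    _ ≤ (∫ x, f x ∂μ) - ∫ x, f x ∂ν := hf_max hg₀
end

section
/- Let E be a real inner product space, let f : E → ℝ be 1-Lipschitz, and let a, b ∈ E with a ≠ b satisfy f(a) − f(b) = ‖a − b‖. Let τ ∈ (0,1) and x_τ = τ·a + (1−τ)·b, and suppose f is (Fréchet) differentiable at x_τ. Then the gradient of f at x_τ equals the unit vector (a − b)/‖a − b‖, which also equals (a − x_τ)/‖a − x_τ‖. -/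
/-!
Along the segment from `b` to `a` the `1`-Lipschitz function `f` gains `‖a - b‖` over a distance
`‖a - b‖`, so it increases at the maximal rate and is affine there: the two Lipschitz bounds on
`[b, x]` and `[x, a]` add up to an equality. Hence the derivative of `f` at an interior point in
the direction `a - b` is `‖a - b‖`. The gradient has norm at most `1`, so the equality case of
Cauchy–Schwarz forces it to be the unit vector along `a - b`.
-/

open Set AffineMap NormedSpace InnerProductSpace
open scoped NNReal

theorem LipschitzWith.apply_lineMap_eq_of_sub_eq
    {E : Type*} [SeminormedAddCommGroup E] [NormedSpace ℝ E] {K : ℝ≥0} {f : E → ℝ}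
    (hf : LipschitzWith K f) {a b : E} (hab : f a - f b = K * dist a b) :
    EqOn (f ∘ lineMap b a) (lineMap (f b) (f a)) (Icc (0 : ℝ) 1) := by
  rintro t ⟨ht₀, ht₁⟩
  have hleft : f (lineMap b a t) - f b ≤ t * (K * dist a b) := by
    calc f (lineMap b a t) - f b ≤ K * dist (lineMap b a t) b :=
          (le_abs_self _).trans (hf.dist_le_mul _ _)
      _ = t * (K * dist a b) := by
          rw [dist_lineMap_left, Real.norm_of_nonneg ht₀, dist_comm]; ring
  have hright : f a - f (lineMap b a t) ≤ (1 - t) * (K * dist a b) := by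
    calc f a - f (lineMap b a t) ≤ K * dist a (lineMap b a t) :=
          (le_abs_self _).trans (hf.dist_le_mul _ _)
      _ = (1 - t) * (K * dist a b) := by
          rw [dist_comm, dist_lineMap_right, Real.norm_of_nonneg (sub_nonneg.2 ht₁), dist_comm]
          ring
  rw [Function.comp_apply, lineMap_apply_ring', hab]
  linarith

theorem HasFDerivAt.apply_sub_eq_sub_of_eqOn_lineMap
    {E F : Type*} [NormedAddCommGroup E] [NormedSpace ℝ E] [NormedAddCommGroup F]
    [NormedSpace ℝ F] {f : E → F} {f' : E →L[ℝ] F} {a b : E} {τ : ℝ}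
    (hf : HasFDerivAt f f' (lineMap b a τ)) (hτ : τ ∈ Ioo (0 : ℝ) 1)
    (hseg : EqOn (f ∘ lineMap b a) (lineMap (f b) (f a)) (Ioo (0 : ℝ) 1)) :
    f' (a - b) = f a - f b := by
  have hcomp : HasDerivAt (f ∘ lineMap b a) (f' (a - b)) τ :=
    hf.comp_hasDerivAt τ hasDerivAt_lineMap
  have haff : HasDerivAt (f ∘ lineMap b a) (f a - f b) τ :=
    hasDerivAt_lineMap.congr_of_eventuallyEq (hseg.eventuallyEq_of_mem (Ioo_mem_nhds hτ.1 hτ.2) :)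
  exact hcomp.unique haff

theorem eq_normalize_of_norm_le_one_of_inner_eq_norm
    {E : Type*} [NormedAddCommGroup E] [InnerProductSpace ℝ E] {g v : E}
    (hg : ‖g‖ ≤ 1) (hv : v ≠ 0) (hgv : ⟪g, v⟫_ℝ = ‖v‖) : g = normalize v := by
  have hv' : 0 < ‖v‖ := norm_pos_iff.2 hv
  have hg1 : ‖g‖ = 1 := by
    refine le_antisymm hg (le_of_mul_le_mul_right ?_ hv')
    rw [one_mul]
    exact hgv ▸ real_inner_le_norm g v
  have hpar : ‖v‖ • g = v := by
    simpa [hg1] using (inner_eq_norm_mul_iff_real (x := g) (y := v)).1 (by rw [hg1, one_mul, hgv])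
  rw [eq_comm, NormedSpace.normalize, inv_smul_eq_iff₀ hv'.ne', hpar]

theorem norm_gradient_le_of_lipschitz
    {E : Type*} [NormedAddCommGroup E] [InnerProductSpace ℝ E] [CompleteSpace E]
    {K : ℝ≥0} {f : E → ℝ} (hf : LipschitzWith K f) (x : E) : ‖gradient f x‖ ≤ K := by
  rw [gradient, LinearIsometryEquiv.norm_map]
  exact norm_fderiv_le_of_lipschitz ℝ hf

/-- Gradient direction for a distance-attaining 1-Lipschitz function: if `f a − f b = ‖a − b‖`
with `a ≠ b`, `τ ∈ (0,1)`, and `f` is differentiable at `x_τ = τ·a + (1−τ)·b`, then the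
gradient of `f` at `x_τ` is the unit vector `(a − b)/‖a − b‖ = (a − x_τ)/‖a − x_τ‖`. -/
theorem gradient_eq_unit_direction
    {E : Type*} [NormedAddCommGroup E] [InnerProductSpace ℝ E] [CompleteSpace E]
    (f : E → ℝ) (hf : LipschitzWith 1 f)
    (a b : E) (hne : a ≠ b) (hab : f a - f b = ‖a - b‖)
    (τ : ℝ) (hτ : τ ∈ Set.Ioo (0 : ℝ) 1)
    (hdiff : DifferentiableAt ℝ f (τ • a + (1 - τ) • b)) :
    gradient f (τ • a + (1 - τ) • b) = ‖a - b‖⁻¹ • (a - b) ∧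
    ‖a - b‖⁻¹ • (a - b) =
      ‖a - (τ • a + (1 - τ) • b)‖⁻¹ • (a - (τ • a + (1 - τ) • b)) := by
  have hx : τ • a + (1 - τ) • b = lineMap b a τ := by
    rw [lineMap_apply_module, add_comm]
  have hseg : EqOn (f ∘ lineMap b a) (lineMap (f b) (f a)) (Icc (0 : ℝ) 1) :=
    hf.apply_lineMap_eq_of_sub_eq (by rwa [NNReal.coe_one, one_mul, dist_eq_norm])
  rw [hx] at hdiff ⊢
  have hslope : ⟪gradient f (lineMap b a τ), a - b⟫_ℝ = ‖a - b‖ := by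
    rw [inner_gradient_left, HasFDerivAt.apply_sub_eq_sub_of_eqOn_lineMap hdiff.hasFDerivAt hτ
      (hseg.mono Ioo_subset_Icc_self), hab]
  have hrest : a - lineMap b a τ = (1 - τ) • (a - b) := by
    rw [lineMap_apply_module]; module
  refine ⟨eq_normalize_of_norm_le_one_of_inner_eq_norm ?_ (sub_ne_zero.2 hne) hslope, ?_⟩
  · simpa using norm_gradient_le_of_lipschitz hf (lineMap b a τ)
  · rw [hrest]
    exact (normalize_smul_of_pos (sub_pos.2 hτ.2) (a - b)).symm
end
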